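/- Let s ∈ (0,1), r ∈ [0,1], and for λ > 0 define ψ_{s,λ}(y) = ψ_s(√λ · y) for y > 0, where ψ_s(z) = (2^{1−s}/Γ(s)) z^s K_s(z). There exists a constant c > 0 depending only on s such that for every λ > 0, every y > 0, and every n ∈ ℕ with n ≥ 1, it holds |y^n ψ_{s,λ}^{(n)}(y)| ≤ c · 8^n · n! · λ^{s − r/2} · y^{2s−r}, where ψ_{s,λ}^{(n)} denotes the n-th derivative of ψ_{s,λ}. -/

import Mathlib

/-- The modified Bessel function of the second kind,
`K_ν(z) = ∫₀^∞ exp(−z cosh t) cosh(ν t) dt`. -/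
noncomputable def besselK (ν z : ℝ) : ℝ :=
  ∫ t in Set.Ioi (0:ℝ), Real.exp (-z * Real.cosh t) * Real.cosh (ν * t)

/-- `ψ_s(z) = (2^{1−s}/Γ(s)) z^s K_s(z)`. -/
noncomputable def psi (s z : ℝ) : ℝ :=
  (2 ^ (1 - s) / Real.Gamma s) * z ^ s * besselK s z

/-!
Differentiating under the integral sign and integrating `sinh (ν t) exp (-z cosh t)` by parts give
`(z ^ α K_μ)' = (α - μ) z ^ (α - 1) K_μ - z ^ α K_{μ-1}`. Hence the `n`-th derivative of
`z ^ s K_s(z)` is `∑ₖ a(n,k) z ^ (s + k - n) K_{s-k}(z)`, where `a(n,0) = 0` for `n ≥ 1` and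
`∑ₖ |a(n,k)| 4ᵏ k! ≤ 5ⁿ n!` (test the recursion of `a` against `sign a(n+1,k) 4ᵏ k!`).
Since `K_{s-k} = K_{k-s}`, `cosh (ν t) ≤ exp (ν t)` and `cosh t ≥ 1/2 + eᵗ/4`, the substitution
`u = eᵗ` bounds `z ^ ν K_ν(z)` by `4 ^ ν Γ(ν) e^{-z/2}`; together with `z ^ r e^{-z/2} ≤ 1` and
`Γ(k - s) ≤ k! Γ(1 - s)` this gives `z ^ (s + k) K_{s-k}(z) ≤ Γ(1 - s) 4ᵏ k! z ^ (2s - r)` for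
`k ≥ 1`. For the scaled function the chain rule produces `√λ ⁿ`, which together with `yⁿ` is the
power `zⁿ` at `z = √λ y`.
-/

open Real MeasureTheory Set Filter Topology

lemma cosh_mul_le_exp_abs_mul (a : ℝ) {t : ℝ} (ht : 0 ≤ t) : cosh (a * t) ≤ exp (|a| * t) := by
  rw [← cosh_abs, abs_mul, abs_of_nonneg ht, cosh_eq]
  linarith [exp_le_exp.2 (by nlinarith [abs_nonneg a] : -(|a| * t) ≤ |a| * t)]

lemma abs_sinh_mul_le_exp_abs_mul (a : ℝ) {t : ℝ} (ht : 0 ≤ t) :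
    |sinh (a * t)| ≤ exp (|a| * t) := by
  rw [abs_sinh, abs_mul, abs_of_nonneg ht, sinh_eq]
  linarith [exp_pos (-(|a| * t)), exp_pos (|a| * t)]

lemma exp_div_two_le_cosh (t : ℝ) : exp t / 2 ≤ cosh t := by
  rw [cosh_eq]
  linarith [exp_pos (-t)]

lemma half_add_exp_div_four_le_cosh {t : ℝ} (ht : 0 ≤ t) : 1 / 2 + exp t / 4 ≤ cosh t := by
  rw [cosh_eq, exp_neg]
  have h1 : 1 ≤ exp t := one_le_exp ht
  have h2 : exp t * (exp t)⁻¹ = 1 := mul_inv_cancel₀ (exp_pos t).ne'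
  nlinarith [inv_pos.2 (exp_pos t)]

lemma eventually_mul_sub_mul_cosh_le_neg (c : ℝ) {z : ℝ} (hz : 0 < z) :
    ∀ᶠ t in atTop, c * t - z * cosh t ≤ -t := by
  filter_upwards [eventually_ge_atTop (4 * |c + 1| / z), eventually_ge_atTop 0] with t ht ht0
  have hquad : t ^ 2 / 4 ≤ cosh t := by
    nlinarith [exp_div_two_le_cosh t, quadratic_le_exp_of_nonneg ht0]
  have hct : 4 * (c + 1) ≤ z * t := by
    rw [div_le_iff₀' hz] at ht
    linarith [le_abs_self (c + 1)]
  nlinarith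

lemma tendsto_exp_mul_sub_mul_cosh (c : ℝ) {z : ℝ} (hz : 0 < z) :
    Tendsto (fun t => exp (c * t - z * cosh t)) atTop (𝓝 0) := by
  refine squeeze_zero' (Eventually.of_forall fun t => (exp_pos _).le) ?_
    (tendsto_exp_atBot.comp tendsto_neg_atTop_atBot)
  filter_upwards [eventually_mul_sub_mul_cosh_le_neg c hz] with t ht
  exact exp_le_exp.2 ht

lemma integrableOn_exp_mul_sub_mul_cosh (c : ℝ) {z : ℝ} (hz : 0 < z) :
    IntegrableOn (fun t => exp (c * t - z * cosh t)) (Ioi 0) := by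
  refine integrable_of_isBigO_exp_neg one_pos (by fun_prop) (Asymptotics.isBigO_iff.2 ⟨1, ?_⟩)
  filter_upwards [eventually_mul_sub_mul_cosh_le_neg c hz] with t ht
  simpa [abs_of_pos (exp_pos _)] using ht

lemma integrableOn_of_abs_le_exp_mul_sub_mul_cosh {f : ℝ → ℝ} (hf : Continuous f) {A c z : ℝ}
    (hz : 0 < z) (hb : ∀ t, 0 < t → |f t| ≤ A * exp (c * t - z * cosh t)) :
    IntegrableOn f (Ioi 0) := by
  refine ((integrableOn_exp_mul_sub_mul_cosh c hz).const_mul A).mono'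
    hf.aestronglyMeasurable.restrict ?_
  filter_upwards [ae_restrict_mem measurableSet_Ioi] with t ht
  exact hb t ht

lemma integrableOn_besselK_integrand (ν : ℝ) {z : ℝ} (hz : 0 < z) :
    IntegrableOn (fun t => exp (-z * cosh t) * cosh (ν * t)) (Ioi 0) := by
  refine integrableOn_of_abs_le_exp_mul_sub_mul_cosh (A := 1) (c := |ν|) (by fun_prop) hz
    fun t ht => ?_
  rw [abs_of_nonneg (by positivity), one_mul, sub_eq_neg_add, exp_add, ← neg_mul]
  exact mul_le_mul_of_nonneg_left (cosh_mul_le_exp_abs_mul ν ht.le) (exp_pos _).le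

lemma integrableOn_sinh_mul_sinh_mul_exp (ν : ℝ) {z : ℝ} (hz : 0 < z) :
    IntegrableOn (fun t => sinh t * sinh (ν * t) * exp (-z * cosh t)) (Ioi 0) := by
  refine integrableOn_of_abs_le_exp_mul_sub_mul_cosh (A := 1) (c := 1 + |ν|) (by fun_prop) hz
    fun t ht => ?_
  have h1 : |sinh t| ≤ exp t := by simpa using abs_sinh_mul_le_exp_abs_mul 1 ht.le
  calc |sinh t * sinh (ν * t) * exp (-z * cosh t)|
      = |sinh t| * |sinh (ν * t)| * exp (-z * cosh t) := by
        rw [abs_mul, abs_mul, abs_of_pos (exp_pos _)]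
    _ ≤ exp t * exp (|ν| * t) * exp (-z * cosh t) := by
        gcongr
        exact abs_sinh_mul_le_exp_abs_mul ν ht.le
    _ = 1 * exp ((1 + |ν|) * t - z * cosh t) := by
        rw [← exp_add, ← exp_add]; ring_nf

lemma cosh_mul_cosh_eq (ν t : ℝ) :
    cosh t * cosh (ν * t) = sinh t * sinh (ν * t) + cosh ((ν - 1) * t) := by
  rw [sub_mul, one_mul, cosh_sub]
  ring

lemma integrableOn_cosh_mul_besselK_integrand (ν : ℝ) {z : ℝ} (hz : 0 < z) :
    IntegrableOn (fun t => cosh t * (exp (-z * cosh t) * cosh (ν * t))) (Ioi 0) := by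
  refine ((integrableOn_sinh_mul_sinh_mul_exp ν hz).add
    (integrableOn_besselK_integrand (ν - 1) hz)).congr_fun (fun t _ => ?_) measurableSet_Ioi
  simp only [Pi.add_apply]
  rw [mul_left_comm, cosh_mul_cosh_eq]
  ring

lemma besselK_nonneg (ν z : ℝ) : 0 ≤ besselK ν z :=
  setIntegral_nonneg measurableSet_Ioi fun t _ => by positivity

lemma besselK_neg (ν z : ℝ) : besselK (-ν) z = besselK ν z := by
  simp only [besselK, neg_mul, cosh_neg]

/-- Integration by parts: `sinh (ν t) exp (-z cosh t)` vanishes at `0` and at `∞`. -/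
lemma integral_sinh_mul_sinh_mul_exp (ν : ℝ) {z : ℝ} (hz : 0 < z) :
    ∫ t in Ioi 0, sinh t * sinh (ν * t) * exp (-z * cosh t) = ν / z * besselK ν z := by
  have hderiv : ∀ t, HasDerivAt (fun t => sinh (ν * t) * exp (-z * cosh t))
      (ν * (exp (-z * cosh t) * cosh (ν * t)) - z * (sinh t * sinh (ν * t) * exp (-z * cosh t)))
      t := fun t => by
    have h := (hasDerivAt_const_mul (x := t) ν).sinh.mul ((hasDerivAt_cosh t).const_mul (-z)).exp
    exact h.congr_deriv (by ring)
  have hlim : Tendsto (fun t => sinh (ν * t) * exp (-z * cosh t)) atTop (𝓝 0) := by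
    refine squeeze_zero_norm' ?_ (tendsto_exp_mul_sub_mul_cosh |ν| hz)
    filter_upwards [eventually_ge_atTop 0] with t ht
    rw [norm_mul, norm_of_nonneg (exp_pos _).le, sub_eq_add_neg, exp_add, ← neg_mul]
    gcongr
    exact abs_sinh_mul_le_exp_abs_mul ν ht
  have hK := (integrableOn_besselK_integrand ν hz).const_mul ν
  have hS := (integrableOn_sinh_mul_sinh_mul_exp ν hz).const_mul z
  have hftc := integral_Ioi_of_hasDerivAt_of_tendsto (hderiv 0).continuousAt.continuousWithinAt
    (fun t _ => hderiv t) (hK.sub hS) hlim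
  rw [integral_sub hK hS, integral_const_mul, integral_const_mul] at hftc
  simp only [mul_zero, sinh_zero, zero_mul, sub_zero] at hftc
  rw [div_mul_eq_mul_div, eq_div_iff hz.ne', besselK]
  linarith

lemma hasDerivAt_besselK (ν : ℝ) {z : ℝ} (hz : 0 < z) :
    HasDerivAt (besselK ν) (-(ν / z * besselK ν z + besselK (ν - 1) z)) z := by
  have hz2 : 0 < z / 2 := half_pos hz
  have key := hasDerivAt_integral_of_dominated_loc_of_deriv_le (μ := volume.restrict (Ioi 0))
    (F := fun x t => exp (-x * cosh t) * cosh (ν * t))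
    (F' := fun x t => -(cosh t * (exp (-x * cosh t) * cosh (ν * t))))
    (bound := fun t => cosh t * (exp (-(z / 2) * cosh t) * cosh (ν * t)))
    (Ioi_mem_nhds (half_lt_self hz)) (.of_forall fun x => by fun_prop)
    (integrableOn_besselK_integrand ν hz) (by fun_prop) (.of_forall fun t x hx => ?_)
    (integrableOn_cosh_mul_besselK_integrand ν hz2) (.of_forall fun t x _ => ?_)
  · have hcosh : ∫ t in Ioi 0, cosh t * (exp (-z * cosh t) * cosh (ν * t))
        = ν / z * besselK ν z + besselK (ν - 1) z := by
      rw [← integral_sinh_mul_sinh_mul_exp ν hz, besselK, ← integral_add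
        (integrableOn_sinh_mul_sinh_mul_exp ν hz) (integrableOn_besselK_integrand (ν - 1) hz)]
      refine integral_congr_ae (.of_forall fun t => ?_)
      dsimp only
      rw [mul_left_comm, cosh_mul_cosh_eq]
      ring
    rw [← hcosh, ← integral_neg]
    exact key.2
  · rw [norm_neg, norm_of_nonneg (by positivity)]
    gcongr
    nlinarith [one_le_cosh t, mem_Ioi.1 hx]
  · exact (((hasDerivAt_id x).neg.mul_const (cosh t)).exp.mul_const (cosh (ν * t))).congr_deriv
      (by simp only [Pi.neg_apply, id]; ring)

lemma hasDerivAt_rpow_mul_besselK (α μ : ℝ) {z : ℝ} (hz : 0 < z) :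
    HasDerivAt (fun z => z ^ α * besselK μ z)
      ((α - μ) * z ^ (α - 1) * besselK μ z - z ^ α * besselK (μ - 1) z) z := by
  refine ((hasDerivAt_rpow_const (Or.inl hz.ne')).mul (hasDerivAt_besselK μ hz)).congr_deriv ?_
  rw [rpow_sub_one hz.ne']
  field_simp
  ring

/-- The coefficient of `z ^ (s + k - n) * besselK (s - k) z` in the `n`-th derivative of
`z ^ s * besselK s z`; the recursion is read off `hasDerivAt_rpow_mul_besselK`. -/
def besselCoeff : ℕ → ℕ → ℝ
  | 0, 0 => 1
  | 0, _ + 1 => 0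
  | n + 1, 0 => -n * besselCoeff n 0
  | n + 1, k + 1 => (2 * (k + 1) - n) * besselCoeff n (k + 1) - besselCoeff n k

lemma besselCoeff_eq_zero_of_lt {n k : ℕ} (h : n < k) : besselCoeff n k = 0 := by
  induction n generalizing k with
  | zero => obtain ⟨k, rfl⟩ := Nat.exists_eq_add_of_lt h; rfl
  | succ n ih =>
    obtain ⟨k, rfl⟩ : ∃ j, k = j + 1 := ⟨k - 1, by omega⟩
    simp only [besselCoeff, ih (by omega : n < k + 1), ih (by omega : n < k), mul_zero, sub_zero]

lemma besselCoeff_succ_zero (n : ℕ) : besselCoeff (n + 1) 0 = 0 := by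
  induction n with
  | zero => simp [besselCoeff]
  | succ n ih => rw [besselCoeff, ih, mul_zero]

lemma sum_besselCoeff_succ_mul (n : ℕ) (f : ℕ → ℝ) :
    ∑ k ∈ Finset.range (n + 2), besselCoeff (n + 1) k * f k
      = ∑ k ∈ Finset.range (n + 1), besselCoeff n k * ((2 * k - n) * f k - f (k + 1)) := by
  set g : ℕ → ℝ := fun k => (2 * k - n) * besselCoeff n k * f k with hg
  calc ∑ k ∈ Finset.range (n + 2), besselCoeff (n + 1) k * f k
      = ∑ k ∈ Finset.range (n + 1), (g (k + 1) - besselCoeff n k * f (k + 1)) + g 0 := by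
        rw [Finset.sum_range_succ']
        congr 1
        · refine Finset.sum_congr rfl fun k _ => ?_
          rw [besselCoeff, hg]
          push_cast
          ring
        · rw [besselCoeff, hg]
          push_cast
          ring
    _ = ∑ k ∈ Finset.range (n + 2), g k
          - ∑ k ∈ Finset.range (n + 1), besselCoeff n k * f (k + 1) := by
        rw [Finset.sum_sub_distrib, Finset.sum_range_succ' g]
        ring
    _ = _ := by
        rw [Finset.sum_range_succ, hg]
        dsimp only
        rw [besselCoeff_eq_zero_of_lt (Nat.lt_succ_self n), mul_zero, zero_mul, add_zero,
          ← Finset.sum_sub_distrib]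
        exact Finset.sum_congr rfl fun k _ => by ring

lemma abs_sign_le_one {α : Type*} [Ring α] [LinearOrder α] [IsStrictOrderedRing α] (x : α) :
    |((SignType.sign x : SignType) : α)| ≤ 1 := by
  rcases lt_trichotomy x 0 with h | h | h <;> simp [h]

lemma sum_besselCoeff_succ_mul_le (n : ℕ) {f : ℕ → ℝ}
    (hf : ∀ k, |f k| ≤ 4 ^ k * k.factorial) :
    ∑ k ∈ Finset.range (n + 2), besselCoeff (n + 1) k * f k
      ≤ (5 * n + 4) * ∑ k ∈ Finset.range (n + 1), |besselCoeff n k| * (4 ^ k * k.factorial) := by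
  rw [sum_besselCoeff_succ_mul, Finset.mul_sum]
  refine Finset.sum_le_sum fun k hk => ?_
  have hkn : (k : ℝ) ≤ n := by exact_mod_cast Nat.lt_succ_iff.1 (Finset.mem_range.1 hk)
  have hk0 : (0 : ℝ) ≤ k := k.cast_nonneg
  have hcoef : |(2 * k - n : ℝ)| ≤ n := abs_le.2 ⟨by linarith, by linarith⟩
  have hf_succ : |f (k + 1)| ≤ 4 * (n + 1) * (4 ^ k * k.factorial) := by
    refine (hf (k + 1)).trans ?_
    rw [pow_succ, Nat.factorial_succ, Nat.cast_mul, Nat.cast_succ]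
    have : (0 : ℝ) ≤ 4 ^ k * k.factorial := by positivity
    nlinarith
  calc besselCoeff n k * ((2 * k - n) * f k - f (k + 1))
      ≤ |besselCoeff n k| * (|(2 * k - n : ℝ)| * |f k| + |f (k + 1)|) := by
        refine (le_abs_self _).trans ?_
        rw [abs_mul]
        refine mul_le_mul_of_nonneg_left ((abs_sub _ _).trans_eq ?_) (abs_nonneg _)
        rw [abs_mul]
    _ ≤ |besselCoeff n k| * (n * (4 ^ k * k.factorial) + 4 * (n + 1) * (4 ^ k * k.factorial)) := by
        gcongr ?_ * (?_ + ?_)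
        exact mul_le_mul hcoef (hf k) (abs_nonneg _) (Nat.cast_nonneg n)
    _ = (5 * n + 4) * (|besselCoeff n k| * (4 ^ k * k.factorial)) := by ring

lemma sum_abs_besselCoeff_mul_le (n : ℕ) :
    ∑ k ∈ Finset.range (n + 1), |besselCoeff n k| * (4 ^ k * k.factorial)
      ≤ 5 ^ n * n.factorial := by
  induction n with
  | zero => simp [besselCoeff]
  | succ n ih =>
    calc ∑ k ∈ Finset.range (n + 2), |besselCoeff (n + 1) k| * (4 ^ k * k.factorial)
        = ∑ k ∈ Finset.range (n + 2), besselCoeff (n + 1) k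
            * ((SignType.sign (besselCoeff (n + 1) k) : ℝ) * (4 ^ k * k.factorial)) :=
          Finset.sum_congr rfl fun k _ => by rw [← mul_assoc (besselCoeff _ _), self_mul_sign]
      _ ≤ (5 * n + 4) * ∑ k ∈ Finset.range (n + 1), |besselCoeff n k| * (4 ^ k * k.factorial) :=
          sum_besselCoeff_succ_mul_le n fun k => by
            rw [abs_mul, abs_of_nonneg (by positivity : (0 : ℝ) ≤ 4 ^ k * k.factorial)]
            exact mul_le_of_le_one_left (by positivity) (abs_sign_le_one _)
      _ ≤ (5 * n + 4) * (5 ^ n * n.factorial) := by gcongr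
      _ ≤ 5 ^ (n + 1) * (n + 1).factorial := by
          rw [pow_succ, Nat.factorial_succ]
          push_cast
          have : (0 : ℝ) ≤ 5 ^ n * n.factorial := by positivity
          nlinarith

noncomputable def rpowBesselKDeriv (s : ℝ) (n : ℕ) (z : ℝ) : ℝ :=
  ∑ k ∈ Finset.range (n + 1), besselCoeff n k * (z ^ (s + k - n) * besselK (s - k) z)

lemma rpowBesselKDeriv_zero (s z : ℝ) : rpowBesselKDeriv s 0 z = z ^ s * besselK s z := by
  simp [rpowBesselKDeriv, besselCoeff]

lemma hasDerivAt_rpowBesselKDeriv (s : ℝ) (n : ℕ) {z : ℝ} (hz : 0 < z) :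
    HasDerivAt (rpowBesselKDeriv s n) (rpowBesselKDeriv s (n + 1) z) z := by
  have hterm : ∀ k ∈ Finset.range (n + 1), HasDerivAt
      (fun z => besselCoeff n k * (z ^ (s + k - n) * besselK (s - k) z))
      (besselCoeff n k * ((2 * k - n) * (z ^ (s + k - (n + 1)) * besselK (s - k) z)
        - z ^ (s + (k + 1 : ℕ) - (n + 1)) * besselK (s - (k + 1 : ℕ)) z)) z := fun k _ => by
    refine ((hasDerivAt_rpow_mul_besselK (s + k - n) (s - k) hz).const_mul _).congr_deriv ?_
    push_cast
    ring_nf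
  refine (HasDerivAt.fun_sum hterm).congr_deriv ?_
  rw [rpowBesselKDeriv, sum_besselCoeff_succ_mul]
  push_cast
  rfl

lemma integral_exp_mul_sub_mul_exp_le {ν a : ℝ} (hν : 0 < ν) (ha : 0 < a) :
    ∫ t in Ioi 0, exp (ν * t - a * exp t) ≤ (1 / a) ^ ν * Gamma ν := by
  have hsubst : ∫ t in Ioi 0, exp (ν * t - a * exp t)
      = ∫ u in Ioi 1, u ^ (ν - 1) * exp (-(a * u)) := by
    have h := integral_comp_exp_Ioi (fun u => u ^ (ν - 1) * exp (-(a * u))) 0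
    rw [exp_zero] at h
    rw [← h]
    refine setIntegral_congr_fun measurableSet_Ioi fun t _ => ?_
    rw [smul_eq_mul, ← exp_mul, ← exp_add, ← exp_add]
    ring_nf
  rw [hsubst, ← integral_rpow_mul_exp_neg_mul_Ioi hν ha]
  refine setIntegral_mono_set ?_ ?_ (Ioi_subset_Ioi zero_le_one).eventuallyLE
  · simpa [rpow_one] using integrableOn_rpow_mul_exp_neg_mul_rpow (p := 1) (by linarith) one_pos ha
  · filter_upwards [ae_restrict_mem measurableSet_Ioi] with u hu
    have : 0 < u := hu
    positivity

lemma rpow_mul_besselK_le {ν z : ℝ} (hν : 0 < ν) (hz : 0 < z) :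
    z ^ ν * besselK ν z ≤ 4 ^ ν * Gamma ν * exp (-(z / 2)) := by
  have hK : besselK ν z ≤ exp (-(z / 2)) * ∫ t in Ioi 0, exp (ν * t - z / 4 * exp t) := by
    rw [← integral_const_mul]
    refine setIntegral_mono_on (integrableOn_besselK_integrand ν hz) ?_ measurableSet_Ioi
      fun t ht => ?_
    · refine integrableOn_of_abs_le_exp_mul_sub_mul_cosh (A := exp (-(z / 2))) (c := ν)
        (by fun_prop) (by positivity : 0 < z / 4) fun t ht => ?_
      have hcosh : cosh t ≤ exp t := by simpa using cosh_mul_le_exp_abs_mul 1 ht.le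
      rw [abs_of_pos (by positivity)]
      gcongr
    · have hcosh := mul_le_mul_of_nonneg_left (half_add_exp_div_four_le_cosh (le_of_lt ht)) hz.le
      calc exp (-z * cosh t) * cosh (ν * t) ≤ exp (-z * cosh t) * exp (ν * t) := by
            gcongr
            simpa [abs_of_pos hν] using cosh_mul_le_exp_abs_mul ν (le_of_lt ht)
        _ ≤ exp (-(z / 2)) * exp (ν * t - z / 4 * exp t) := by
            rw [← exp_add, ← exp_add]
            exact exp_le_exp.2 (by linarith)
  calc z ^ ν * besselK ν z ≤ z ^ ν * (exp (-(z / 2)) * ((1 / (z / 4)) ^ ν * Gamma ν)) := by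
        gcongr
        exact hK.trans (mul_le_mul_of_nonneg_left
          (integral_exp_mul_sub_mul_exp_le hν (by positivity)) (exp_pos _).le)
    _ = 4 ^ ν * Gamma ν * exp (-(z / 2)) := by
        rw [one_div_div, div_rpow (by norm_num) hz.le]
        field_simp

lemma Gamma_add_nat_le_factorial_mul {x : ℝ} (hx0 : 0 < x) (hx1 : x ≤ 1) (m : ℕ) :
    Gamma (x + m) ≤ m.factorial * Gamma x := by
  induction m with
  | zero => simp
  | succ m ih =>
    have hpos : 0 < x + m := by positivity
    rw [Nat.cast_succ, ← add_assoc, Gamma_add_one hpos.ne', Nat.factorial_succ, Nat.cast_mul,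
      Nat.cast_succ, mul_assoc]
    exact mul_le_mul (by linarith) ih (Gamma_pos_of_pos hpos).le (by positivity)

lemma rpow_mul_exp_neg_half_le_one {r z : ℝ} (hr : r ∈ Icc (0 : ℝ) 1) (hz : 0 < z) :
    z ^ r * exp (-(z / 2)) ≤ 1 := by
  rw [exp_neg, mul_inv_le_iff₀ (exp_pos _), one_mul]
  rcases le_total z 1 with hz1 | hz1
  · exact (rpow_le_one hz.le hz1 hr.1).trans (one_le_exp (by positivity))
  · calc z ^ r ≤ z ^ (1 : ℝ) := rpow_le_rpow_of_exponent_le hz1 hr.2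
      _ = z := rpow_one z
      _ ≤ exp (z / 4) * exp (z / 4) := by
        have h := add_one_le_exp (z / 4)
        nlinarith [mul_le_mul h h (by positivity) (exp_pos _).le, sq_nonneg (1 - z / 4)]
      _ = exp (z / 2) := by rw [← exp_add]; ring_nf

lemma rpow_add_mul_besselK_sub_le {s r z : ℝ} (hs : s ∈ Ioo (0 : ℝ) 1) (hr : r ∈ Icc (0 : ℝ) 1)
    (hz : 0 < z) {k : ℕ} (hk : 1 ≤ k) :
    z ^ (s + k) * besselK (s - k) z ≤ Gamma (1 - s) * (4 ^ k * k.factorial) * z ^ (2 * s - r) := by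
  obtain ⟨m, rfl⟩ := Nat.exists_eq_add_of_le' hk
  set ν : ℝ := (1 - s) + m with hν_def
  have hν : 0 < ν := by linarith [hs.2, m.cast_nonneg (α := ℝ)]
  have hsk : s - ((m + 1 : ℕ) : ℝ) = -ν := by push_cast; ring
  have hpow : z ^ (s + ((m + 1 : ℕ) : ℝ)) = z ^ (2 * s - r) * z ^ r * z ^ ν := by
    rw [← rpow_add hz, ← rpow_add hz, hν_def]
    push_cast
    ring_nf
  have hGamma : Gamma ν ≤ (m + 1).factorial * Gamma (1 - s) :=
    (Gamma_add_nat_le_factorial_mul (by linarith [hs.2]) (by linarith [hs.1]) m).trans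
      (mul_le_mul_of_nonneg_right (by exact_mod_cast Nat.factorial_le (Nat.le_succ m))
        (Gamma_pos_of_pos (by linarith [hs.2])).le)
  have hfour : (4 : ℝ) ^ ν ≤ 4 ^ (m + 1) := by
    rw [← rpow_natCast]
    exact rpow_le_rpow_of_exponent_le (by norm_num) (by push_cast; linarith [hs.1])
  rw [hsk, besselK_neg, hpow, mul_assoc]
  calc z ^ (2 * s - r) * z ^ r * (z ^ ν * besselK ν z)
      ≤ z ^ (2 * s - r) * z ^ r * (4 ^ ν * Gamma ν * exp (-(z / 2))) :=
        mul_le_mul_of_nonneg_left (rpow_mul_besselK_le hν hz) (by positivity)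
    _ = z ^ (2 * s - r) * (z ^ r * exp (-(z / 2))) * (4 ^ ν * Gamma ν) := by ring
    _ ≤ z ^ (2 * s - r) * 1 * (4 ^ (m + 1) * ((m + 1).factorial * Gamma (1 - s))) := by
        have := Gamma_pos_of_pos hν
        gcongr
        exact rpow_mul_exp_neg_half_le_one hr hz
    _ = Gamma (1 - s) * (4 ^ (m + 1) * (m + 1).factorial) * z ^ (2 * s - r) := by ring

lemma abs_pow_mul_rpowBesselKDeriv_le {s r z : ℝ} (hs : s ∈ Ioo (0 : ℝ) 1)
    (hr : r ∈ Icc (0 : ℝ) 1) (hz : 0 < z) {n : ℕ} (hn : 1 ≤ n) :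
    |z ^ n * rpowBesselKDeriv s n z| ≤ Gamma (1 - s) * 5 ^ n * n.factorial * z ^ (2 * s - r) := by
  have hterm : ∀ k ∈ Finset.range (n + 1),
      |z ^ n * (besselCoeff n k * (z ^ (s + k - n) * besselK (s - k) z))|
        ≤ Gamma (1 - s) * z ^ (2 * s - r) * (|besselCoeff n k| * (4 ^ k * k.factorial)) := by
    intro k _
    rcases Nat.eq_zero_or_pos k with rfl | hk
    · obtain ⟨m, rfl⟩ := Nat.exists_eq_add_of_le' hn
      simp [besselCoeff_succ_zero]
    have hzpow : z ^ n * z ^ (s + k - n) = z ^ (s + k) := by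
      rw [← rpow_natCast, ← rpow_add hz]
      ring_nf
    rw [mul_left_comm, ← mul_assoc (z ^ n), hzpow, abs_mul,
      abs_of_nonneg (mul_nonneg (by positivity) (besselK_nonneg _ _))]
    calc |besselCoeff n k| * (z ^ (s + k) * besselK (s - k) z)
        ≤ |besselCoeff n k| * (Gamma (1 - s) * (4 ^ k * k.factorial) * z ^ (2 * s - r)) :=
          mul_le_mul_of_nonneg_left (rpow_add_mul_besselK_sub_le hs hr hz hk) (abs_nonneg _)
      _ = _ := by ring
  have hGamma : 0 < Gamma (1 - s) := Gamma_pos_of_pos (by linarith [hs.2])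
  calc |z ^ n * rpowBesselKDeriv s n z|
      ≤ ∑ k ∈ Finset.range (n + 1),
          Gamma (1 - s) * z ^ (2 * s - r) * (|besselCoeff n k| * (4 ^ k * k.factorial)) := by
        rw [rpowBesselKDeriv, Finset.mul_sum]
        exact (Finset.abs_sum_le_sum_abs _ _).trans (Finset.sum_le_sum hterm)
    _ ≤ Gamma (1 - s) * z ^ (2 * s - r) * (5 ^ n * n.factorial) := by
        rw [← Finset.mul_sum]
        gcongr
        exact sum_abs_besselCoeff_mul_le n
    _ = _ := by ring

lemma iteratedDeriv_comp_const_mul_eq {f : ℕ → ℝ → ℝ} {c : ℝ} (hc : 0 < c)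
    (hf : ∀ n x, 0 < x → HasDerivAt (f n) (f (n + 1) x) x) (n : ℕ) :
    ∀ y, 0 < y → iteratedDeriv n (fun t => f 0 (c * t)) y = c ^ n * f n (c * y) := by
  induction n with
  | zero => simp
  | succ n ih =>
    intro y hy
    have heq : iteratedDeriv n (fun t => f 0 (c * t)) =ᶠ[𝓝 y] fun t => c ^ n * f n (c * t) :=
      eventually_of_mem (Ioi_mem_nhds hy) ih
    rw [iteratedDeriv_succ, heq.deriv_eq]
    have hcomp := (hf n (c * y) (by positivity)).comp y (hasDerivAt_const_mul c)
    exact (hcomp.const_mul (c ^ n)).deriv.trans (by ring)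

lemma iteratedDerivWithin_psi_comp_const_mul (s : ℝ) {c : ℝ} (hc : 0 < c) (n : ℕ) {y : ℝ}
    (hy : 0 < y) :
    iteratedDerivWithin n (fun t => psi s (c * t)) (Ioi 0) y
      = 2 ^ (1 - s) / Gamma s * c ^ n * rpowBesselKDeriv s n (c * y) := by
  have h := iteratedDeriv_comp_const_mul_eq
    (f := fun n z => 2 ^ (1 - s) / Gamma s * rpowBesselKDeriv s n z) hc
    (fun n x hx => (hasDerivAt_rpowBesselKDeriv s n hx).const_mul _) n y hy
  simp only [rpowBesselKDeriv_zero, ← mul_assoc] at h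
  rw [iteratedDerivWithin_of_isOpen isOpen_Ioi hy]
  exact h.trans (by ring)

/-- Bound on the derivatives of the scaled function
`ψ_{s,λ}(y) = ψ_s(√λ · y)`. -/
theorem scaled_psi_deriv_bound (s : ℝ) (hs : s ∈ Set.Ioo (0:ℝ) 1) :
    ∃ c > 0, ∀ r ∈ Set.Icc (0:ℝ) 1, ∀ l : ℝ, 0 < l → ∀ y : ℝ, 0 < y →
      ∀ n : ℕ, 1 ≤ n →
      |y ^ n * iteratedDerivWithin n (fun t : ℝ => psi s (Real.sqrt l * t))
          (Set.Ioi (0:ℝ)) y| ≤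
        c * 8 ^ n * (n.factorial : ℝ) * l ^ (s - r / 2) * y ^ (2 * s - r) := by
  set cs : ℝ := 2 ^ (1 - s) / Gamma s with hcs_def
  have hcs : 0 < cs := div_pos (by positivity) (Gamma_pos_of_pos hs.1)
  have hGamma : 0 < Gamma (1 - s) := Gamma_pos_of_pos (by linarith [hs.2])
  refine ⟨cs * Gamma (1 - s), mul_pos hcs hGamma, fun r hr l hl y hy n hn => ?_⟩
  have hsl : 0 < √l := sqrt_pos.2 hl
  have hscale : (√l * y) ^ (2 * s - r) = l ^ (s - r / 2) * y ^ (2 * s - r) := by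
    rw [mul_rpow hsl.le hy.le, sqrt_eq_rpow, ← rpow_mul hl.le]
    ring_nf
  calc |y ^ n * iteratedDerivWithin n (fun t => psi s (√l * t)) (Ioi 0) y|
      = cs * |(√l * y) ^ n * rpowBesselKDeriv s n (√l * y)| := by
        rw [iteratedDerivWithin_psi_comp_const_mul s hsl n hy, ← hcs_def]
        simp only [mul_pow, abs_mul, abs_of_pos hcs]
        ring
    _ ≤ cs * (Gamma (1 - s) * 5 ^ n * n.factorial * (√l * y) ^ (2 * s - r)) := by
        gcongr
        exact abs_pow_mul_rpowBesselKDeriv_le hs hr (by positivity) hn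
    _ ≤ cs * (Gamma (1 - s) * 8 ^ n * n.factorial * (√l * y) ^ (2 * s - r)) := by
        gcongr
        norm_num
    _ = cs * Gamma (1 - s) * 8 ^ n * n.factorial * l ^ (s - r / 2) * y ^ (2 * s - r) := by
        rw [hscale]
        ring
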